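/- arXiv:2405.20426 — 7 statements merged into one kernel-verified Lean document; each statement's English description precedes it below -/
import Mathlib

section
/- If a game G with n players is (λ, μ)-smooth (i.e., for all joint actions a, ∑_i (U_i(a) − U_i(a*_i, a_{−i})) ≤ μ·W(a) − λ·W(a*) where a* maximizes W), then every Nash equilibrium a^ne satisfies W(a^ne) ≥ (λ/μ)·W(a*); equivalently the price of anarchy is at least λ/μ. -/
/-- Smoothness implies every Nash equilibrium achieves at least
a `λ/μ` fraction of the optimal welfare. -/
theorem smooth_implies_poa
    {n : ℕ} {A : Fin n → Type*} [∀ i, Fintype (A i)] [∀ i, DecidableEq (A i)]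
    (U : Fin n → (∀ i, A i) → ℝ) (W : (∀ i, A i) → ℝ)
    (hW : ∀ a, 0 ≤ W a)
    (astar : ∀ i, A i) (hopt : ∀ a, W a ≤ W astar)
    (lam mu : ℝ) (hlam : 0 ≤ lam) (hlm : lam ≤ mu)
    (hsmooth : ∀ a : ∀ i, A i,
      ∑ i, (U i a - U i (Function.update a i (astar i))) ≤ mu * W a - lam * W astar)
    (ane : ∀ i, A i)
    (hne : ∀ (i : Fin n) (x : A i), U i (Function.update ane i x) ≤ U i ane) :
    W ane ≥ (lam / mu) * W astar := by
  have hsum : (0:ℝ) ≤ ∑ i, (U i ane - U i (Function.update ane i (astar i))) := by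
    apply Finset.sum_nonneg
    intro i _
    have := hne i (astar i)
    linarith
  have key : lam * W astar ≤ mu * W ane := by
    have := hsmooth ane
    linarith
  rcases eq_or_lt_of_le hlm with h | h
  · rcases le_or_gt mu 0 with hmu | hmu
    · have hl0 : lam = 0 := le_antisymm (h ▸ hmu) hlam
      rw [hl0, zero_div, zero_mul]
      exact hW ane
    · rw [ge_iff_le, div_mul_eq_mul_div, div_le_iff₀ hmu]
      calc lam * W astar ≤ mu * W ane := key
        _ = W ane * mu := mul_comm _ _
  · rcases le_or_gt mu 0 with hmu | hmu
    · have hl0 : lam ≤ 0 := le_of_lt (lt_of_lt_of_le h hmu)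
      have : lam = 0 := le_antisymm hl0 hlam
      rw [this, zero_div, zero_mul]
      exact hW ane
    · rw [ge_iff_le, div_mul_eq_mul_div, div_le_iff₀ hmu]
      calc lam * W astar ≤ mu * W ane := key
        _ = W ane * mu := mul_comm _ _
end

section
/- For every μ > λ ≥ 0, there exists a (λ, μ)-smooth two-player game G with a unique sink equilibrium σ such that every joint action in the support of σ has welfare 0, so the price of sinking of G is 0 while the smoothness bound would suggest λ/μ > 0. Concretely, with ε = (μ−λ)/2, the 3×3 game with welfare matrix W = [[1, (λ+ε)/μ, 0],[(λ+ε)/μ, 0, 0],[0,0,0]] and utility matrices U_1, U_2 given by [(0,0),(0,ε),(0,−ε); (ε,0),(λ,−2λ),(−2λ,λ); (−ε,0),(−2λ,λ),(λ,−2λ)] is (λ,μ)-smooth, has optimal action (e_1,f_1) with W = 1, and its unique sink strongly connected component under best-response dynamics is {(e_2,f_2),(e_3,f_2),(e_2,f_3),(e_3,f_3)}, on which W ≡ 0. -/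
/-- Best-response transition relation for a two-player 3×3 game:
`a` moves to `b` if one player switches to a best response while the other stays. -/
def brStep (U : Fin 2 → Fin 3 → Fin 3 → ℝ) (a b : Fin 3 × Fin 3) : Prop :=
  (b.2 = a.2 ∧ ∀ e' : Fin 3, U 0 e' a.2 ≤ U 0 b.1 a.2) ∨
  (b.1 = a.1 ∧ ∀ f' : Fin 3, U 1 a.1 f' ≤ U 1 a.1 b.2)

/-- A sink strongly connected component of a transition relation. -/
def IsSinkSCC {α : Type*} (step : α → α → Prop) (S : Set α) : Prop :=
  S.Nonempty ∧ (∀ a ∈ S, ∀ b ∈ S, Relation.ReflTransGen step a b) ∧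
    (∀ a ∈ S, ∀ b, step a b → b ∈ S)

/-! ### Auxiliary construction -/

def Wmat : Fin 3 → Fin 3 → ℝ := ![![1,1,0],![1,0,0],![0,0,0]]

def Umat (lam mu : ℝ) : Fin 2 → Fin 3 → Fin 3 → ℝ :=
  ![![![0,0,0], ![0,1,-2*(lam+1)], ![-(lam+1),-2*(lam+1),1]],
    ![![0,mu-lam,-(lam+1)], ![0,-2*(lam+1),1], ![0,1,-2*(lam+1)]]]

section
variable {lam mu : ℝ}

lemma BR0_0 (hl : 0 ≤ lam) (e : Fin 3)
    (h : ∀ e' : Fin 3, Umat lam mu 0 e' 0 ≤ Umat lam mu 0 e 0) : e = 0 ∨ e = 1 := by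
  fin_cases e
  · exact Or.inl rfl
  · exact Or.inr rfl
  · have := h 0; simp [Umat] at this; linarith

lemma BR0_1 (hl : 0 ≤ lam) (e : Fin 3)
    (h : ∀ e' : Fin 3, Umat lam mu 0 e' 1 ≤ Umat lam mu 0 e 1) : e = 1 := by
  fin_cases e
  · have := h 1; simp [Umat] at this; linarith
  · rfl
  · have := h 1; simp [Umat] at this; linarith

lemma BR0_2 (hl : 0 ≤ lam) (e : Fin 3)
    (h : ∀ e' : Fin 3, Umat lam mu 0 e' 2 ≤ Umat lam mu 0 e 2) : e = 2 := by
  fin_cases e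
  · have := h 2; simp [Umat] at this; linarith
  · have := h 2; simp [Umat] at this; linarith
  · rfl

lemma BR0_1' (hl : 0 ≤ lam) : ∀ e' : Fin 3, Umat lam mu 0 e' 1 ≤ Umat lam mu 0 (1:Fin 3) 1 := by
  intro e'; fin_cases e' <;> simp [Umat] <;> linarith

lemma BR0_2' (hl : 0 ≤ lam) : ∀ e' : Fin 3, Umat lam mu 0 e' 2 ≤ Umat lam mu 0 (2:Fin 3) 2 := by
  intro e'; fin_cases e' <;> simp [Umat] <;> linarith

lemma BR1_0 (hl : 0 ≤ lam) (hm : lam < mu) (f : Fin 3)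
    (h : ∀ f' : Fin 3, Umat lam mu 1 0 f' ≤ Umat lam mu 1 0 f) : f = 1 := by
  fin_cases f
  · have := h 1; simp [Umat] at this; linarith
  · rfl
  · have := h 1; simp [Umat] at this; linarith

lemma BR1_1 (hl : 0 ≤ lam) (f : Fin 3)
    (h : ∀ f' : Fin 3, Umat lam mu 1 1 f' ≤ Umat lam mu 1 1 f) : f = 2 := by
  fin_cases f
  · have := h 2; simp [Umat] at this; linarith
  · have := h 2; simp [Umat] at this; linarith
  · rfl

lemma BR1_2 (hl : 0 ≤ lam) (f : Fin 3)
    (h : ∀ f' : Fin 3, Umat lam mu 1 2 f' ≤ Umat lam mu 1 2 f) : f = 1 := by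
  fin_cases f
  · have := h 1; simp [Umat] at this; linarith
  · rfl
  · have := h 1; simp [Umat] at this; linarith

lemma BR1_0' (hl : 0 ≤ lam) (hm : lam < mu) :
    ∀ f' : Fin 3, Umat lam mu 1 0 f' ≤ Umat lam mu 1 0 (1:Fin 3) := by
  intro f'; fin_cases f' <;> simp [Umat] <;> linarith

lemma BR1_1' (hl : 0 ≤ lam) : ∀ f' : Fin 3, Umat lam mu 1 1 f' ≤ Umat lam mu 1 1 (2:Fin 3) := by
  intro f'; fin_cases f' <;> simp [Umat] <;> linarith

lemma BR1_2' (hl : 0 ≤ lam) : ∀ f' : Fin 3, Umat lam mu 1 2 f' ≤ Umat lam mu 1 2 (1:Fin 3) := by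
  intro f'; fin_cases f' <;> simp [Umat] <;> linarith

abbrev Tset : Set (Fin 3 × Fin 3) := {(1, 1), (1, 2), (2, 1), (2, 2)}

lemma T_closed (hl : 0 ≤ lam) :
    ∀ a ∈ Tset, ∀ b, brStep (Umat lam mu) a b → b ∈ Tset := by
  intro a ha b hb
  obtain ⟨b1, b2⟩ := b
  simp only [Tset, Set.mem_insert_iff, Set.mem_singleton_iff] at ha ⊢
  rcases ha with rfl | rfl | rfl | rfl <;>
    rcases hb with ⟨h2, h1⟩ | ⟨h1, h2⟩ <;> simp only [Prod.mk.injEq] at h2 h1 ⊢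
  · exact Or.inl ⟨BR0_1 hl b1 h1, h2⟩
  · exact Or.inr <| Or.inl ⟨h1, BR1_1 hl b2 h2⟩
  · exact Or.inr <| Or.inr <| Or.inr ⟨BR0_2 hl b1 h1, h2⟩
  · exact Or.inr <| Or.inl ⟨h1, BR1_1 hl b2 h2⟩
  · exact Or.inl ⟨BR0_1 hl b1 h1, h2⟩
  · exact Or.inr <| Or.inr <| Or.inl ⟨h1, BR1_2 hl b2 h2⟩
  · exact Or.inr <| Or.inr <| Or.inr ⟨BR0_2 hl b1 h1, h2⟩
  · exact Or.inr <| Or.inr <| Or.inl ⟨h1, BR1_2 hl b2 h2⟩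

lemma step11_12 (hl : 0 ≤ lam) : brStep (Umat lam mu) (1,1) (1,2) := Or.inr ⟨rfl, BR1_1' hl⟩
lemma step12_22 (hl : 0 ≤ lam) : brStep (Umat lam mu) (1,2) (2,2) := Or.inl ⟨rfl, BR0_2' hl⟩
lemma step22_21 (hl : 0 ≤ lam) : brStep (Umat lam mu) (2,2) (2,1) := Or.inr ⟨rfl, BR1_2' hl⟩
lemma step21_11 (hl : 0 ≤ lam) : brStep (Umat lam mu) (2,1) (1,1) := Or.inl ⟨rfl, BR0_1' hl⟩
lemma step00_01 (hl : 0 ≤ lam) (hm : lam < mu) : brStep (Umat lam mu) (0,0) (0,1) :=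
  Or.inr ⟨rfl, BR1_0' hl hm⟩
lemma step01_11 (hl : 0 ≤ lam) : brStep (Umat lam mu) (0,1) (1,1) := Or.inl ⟨rfl, BR0_1' hl⟩
lemma step02_22 (hl : 0 ≤ lam) : brStep (Umat lam mu) (0,2) (2,2) := Or.inl ⟨rfl, BR0_2' hl⟩
lemma step10_12 (hl : 0 ≤ lam) : brStep (Umat lam mu) (1,0) (1,2) := Or.inr ⟨rfl, BR1_1' hl⟩
lemma step20_21 (hl : 0 ≤ lam) : brStep (Umat lam mu) (2,0) (2,1) := Or.inr ⟨rfl, BR1_2' hl⟩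

open Relation in
lemma T_conn (hl : 0 ≤ lam) :
    ∀ a ∈ Tset, ∀ b ∈ Tset, Relation.ReflTransGen (brStep (Umat lam mu)) a b := by
  have c1 : ReflTransGen (brStep (Umat lam mu)) (1,1) (1,2) :=
    ReflTransGen.single (step11_12 hl)
  have c2 : ReflTransGen (brStep (Umat lam mu)) (1,2) (2,2) :=
    ReflTransGen.single (step12_22 hl)
  have c3 : ReflTransGen (brStep (Umat lam mu)) (2,2) (2,1) :=
    ReflTransGen.single (step22_21 hl)
  have c4 : ReflTransGen (brStep (Umat lam mu)) (2,1) (1,1) :=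
    ReflTransGen.single (step21_11 hl)
  intro a ha b hb
  simp only [Tset, Set.mem_insert_iff, Set.mem_singleton_iff] at ha hb
  rcases ha with rfl | rfl | rfl | rfl <;> rcases hb with rfl | rfl | rfl | rfl
  · exact .refl
  · exact c1
  · exact c1.trans (c2.trans c3)
  · exact c1.trans c2
  · exact (c2.trans c3).trans c4
  · exact .refl
  · exact c2.trans c3
  · exact c2
  · exact c4
  · exact c4.trans c1
  · exact .refl
  · exact (c4.trans c1).trans c2
  · exact (c3.trans c4)
  · exact (c3.trans c4).trans c1
  · exact c3
  · exact .refl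

open Relation in
lemma reach_T (hl : 0 ≤ lam) (hm : lam < mu) :
    ∀ a : Fin 3 × Fin 3, ∃ b ∈ Tset, Relation.ReflTransGen (brStep (Umat lam mu)) a b := by
  intro ⟨e, f⟩
  fin_cases e <;> fin_cases f
  · exact ⟨(1,1), by simp [Tset],
      (ReflTransGen.single (step00_01 hl hm)).trans (ReflTransGen.single (step01_11 hl))⟩
  · exact ⟨(1,1), by simp [Tset], ReflTransGen.single (step01_11 hl)⟩
  · exact ⟨(2,2), by simp [Tset], ReflTransGen.single (step02_22 hl)⟩
  · exact ⟨(1,2), by simp [Tset], ReflTransGen.single (step10_12 hl)⟩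
  · exact ⟨(1,1), by simp [Tset], .refl⟩
  · exact ⟨(1,2), by simp [Tset], .refl⟩
  · exact ⟨(2,1), by simp [Tset], ReflTransGen.single (step20_21 hl)⟩
  · exact ⟨(2,1), by simp [Tset], .refl⟩
  · exact ⟨(2,2), by simp [Tset], .refl⟩

lemma closed_rtg {α : Type*} {step : α → α → Prop} {S : Set α}
    (hS : ∀ a ∈ S, ∀ b, step a b → b ∈ S) {a b : α}
    (h : Relation.ReflTransGen step a b) (ha : a ∈ S) : b ∈ S := by
  induction h with
  | refl => exact ha
  | tail _ h2 ih => exact hS _ ih _ h2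

end

/-- For every `μ > λ ≥ 0` there is a `(λ,μ)`-smooth two-player game whose
unique sink strongly connected component under best-response dynamics has welfare `0`
everywhere, while the optimal welfare is `1`; hence the price of sinking is `0`. -/
theorem exists_smooth_game_with_zero_sink :
    ∀ lam mu : ℝ, 0 ≤ lam → lam < mu →
    ∃ (W : Fin 3 → Fin 3 → ℝ) (U : Fin 2 → Fin 3 → Fin 3 → ℝ),
      (∀ e f, 0 ≤ W e f) ∧
      W 0 0 = 1 ∧ (∀ e f, W e f ≤ W 0 0) ∧
      (∀ a : Fin 3 × Fin 3,
        (U 0 a.1 a.2 - U 0 0 a.2) + (U 1 a.1 a.2 - U 1 a.1 0)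
          ≤ mu * W a.1 a.2 - lam * W 0 0) ∧
      (∀ S : Set (Fin 3 × Fin 3),
        IsSinkSCC (brStep U) S ↔ S = {(1, 1), (1, 2), (2, 1), (2, 2)}) ∧
      (∀ a : Fin 3 × Fin 3,
        a ∈ ({(1, 1), (1, 2), (2, 1), (2, 2)} : Set (Fin 3 × Fin 3)) → W a.1 a.2 = 0) := by
  intro lam mu hl hm
  refine ⟨Wmat, Umat lam mu, ?_, rfl, ?_, ?_, ?_, ?_⟩
  · intro e f; fin_cases e <;> fin_cases f <;> norm_num [Wmat]
  · intro e f; fin_cases e <;> fin_cases f <;> norm_num [Wmat]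
  · rintro ⟨e, f⟩
    fin_cases e <;> fin_cases f <;>
      simp [Wmat, Umat, Matrix.vecHead, Matrix.vecTail] <;> linarith
  · intro S
    constructor
    · rintro ⟨⟨a, haS⟩, hconn, hclosed⟩
      obtain ⟨b, hbT, hab⟩ := reach_T hl hm a
      have hbS : b ∈ S := closed_rtg hclosed hab haS
      apply Set.eq_of_subset_of_subset
      · intro x hx
        exact closed_rtg (T_closed hl) (hconn b hbS x hx) hbT
      · intro c hc
        exact closed_rtg hclosed (T_conn hl b hbT c hc) hbS
    · rintro rfl
      exact ⟨⟨(1,1), by simp⟩, T_conn hl, T_closed hl⟩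
  · intro a ha
    simp only [Set.mem_insert_iff, Set.mem_singleton_iff] at ha
    rcases ha with rfl | rfl | rfl | rfl <;> rfl
end

section
/- Let G be an n-player game with nonnegative welfare W such that all best responses are unique, let λ_c, μ_c satisfy the common-interest smoothness inequality ∑_i (W(a) − W(a*_i, a_{−i})) ≤ μ_c W(a) − λ_c W(a*) for all a, and suppose G is β-arithmetically misaligned: |U_i(a) − W(a)| ≤ β W(a*) for all i and a (using the optimal welfare as bound). Then every sink equilibrium σ satisfies E_{a∼σ}[W(a)] ≥ max((λ_c − 4βn)/μ_c, 0) · W(a*); i.e., the price of sinking is at least max((λ_c − 4βn)/μ_c, 0). -/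
/-!
Along the best-response chain, stationarity of `σ` makes the expected one-step welfare
change `∑ᵢ (W a - W (brᵢ a, a₋ᵢ))` vanish. Pointwise, that change exceeds the smoothness
deviation `∑ᵢ (W a - W (a*ᵢ, a₋ᵢ)) ≤ μ_c W a - λ_c W a*` by at most `2 β n W a*`, because a
best response loses at most `2 β W a*` of welfare against `a*ᵢ` when utilities are within
`β W a*` of welfare.
Averaging over `σ` gives `(λ_c - 2 β n) W a* ≤ μ_c E_σ[W]`.
-/

open Finset

section StationaryChain

variable {α : Type*} [Fintype α] [DecidableEq α] {n : ℕ}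

def IsUniformStepStationary (step : Fin n → α → α) (σ : α → ℝ) : Prop :=
  ∀ a, σ a = (1 / (n : ℝ)) * ∑ b, (#{i | step i b = a} : ℝ) * σ b

lemma sum_card_filter_step_mul (step : Fin n → α → α) (b : α) (f : α → ℝ) :
    ∑ a, (#{i | step i b = a} : ℝ) * f a = ∑ i, f (step i b) := by
  rw [← sum_fiberwise' univ (fun i => step i b) f]
  simp only [sum_const, nsmul_eq_mul]

lemma IsUniformStepStationary.natCast_mul_eq {step : Fin n → α → α} {σ : α → ℝ}
    (hσ : IsUniformStepStationary step σ) (a : α) :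
    (n : ℝ) * σ a = ∑ b, (#{i | step i b = a} : ℝ) * σ b := by
  rcases Nat.eq_zero_or_pos n with rfl | hn
  · simp -- `Fin 0` is empty, so the junk value `1 / 0 = 0` in `hσ` is harmless
  · rw [hσ a, ← mul_assoc, mul_one_div_cancel (by positivity), one_mul]

lemma IsUniformStepStationary.natCast_mul_sum {step : Fin n → α → α} {σ : α → ℝ}
    (hσ : IsUniformStepStationary step σ) (f : α → ℝ) :
    (n : ℝ) * ∑ a, σ a * f a = ∑ b, σ b * ∑ i, f (step i b) :=
  calc (n : ℝ) * ∑ a, σ a * f a = ∑ a, (n * σ a) * f a := by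
        rw [mul_sum]; exact sum_congr rfl fun _ _ => by ring
    _ = ∑ a, ∑ b, (#{i | step i b = a} : ℝ) * σ b * f a := by
        simp_rw [hσ.natCast_mul_eq, sum_mul]
    _ = ∑ b, σ b * ∑ a, (#{i | step i b = a} : ℝ) * f a := by
        rw [sum_comm]; simp_rw [mul_sum]
        exact sum_congr rfl fun _ _ => sum_congr rfl fun _ _ => by ring
    _ = ∑ b, σ b * ∑ i, f (step i b) := by simp_rw [sum_card_filter_step_mul]

lemma IsUniformStepStationary.sum_mul_sum_sub_step {step : Fin n → α → α} {σ : α → ℝ}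
    (hσ : IsUniformStepStationary step σ) (f : α → ℝ) :
    ∑ b, σ b * ∑ i, (f b - f (step i b)) = 0 :=
  calc ∑ b, σ b * ∑ i, (f b - f (step i b))
      = ∑ b, ((n : ℝ) * (σ b * f b) - σ b * ∑ i, f (step i b)) := by
        simp only [sum_sub_distrib, sum_const, card_univ, Fintype.card_fin, nsmul_eq_mul, mul_sub]
        exact congrArg (· - _) (sum_congr rfl fun _ _ => by ring)
    _ = 0 := by rw [sum_sub_distrib, ← mul_sum, hσ.natCast_mul_sum, sub_self]

end StationaryChain

section Misalignment

variable {n : ℕ} {A : Fin n → Type*}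
  {U : Fin n → (∀ j, A j) → ℝ} {W : (∀ j, A j) → ℝ} {br : ∀ i : Fin n, (∀ j, A j) → A i}
  {ε : ℝ}

lemma sub_welfare_bestResponse_le
    (hbr : ∀ i a x, U i (Function.update a i x) ≤ U i (Function.update a i (br i a)))
    (hmis : ∀ i a, |U i a - W a| ≤ ε) (i : Fin n) (a : ∀ j, A j) (x : A i) :
    W (Function.update a i x) - W (Function.update a i (br i a)) ≤ 2 * ε := by
  have hx := abs_le.1 (hmis i (Function.update a i x))
  have hb := abs_le.1 (hmis i (Function.update a i (br i a)))
  linarith [hbr i a x]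

lemma sum_sub_welfare_bestResponse_le {astar : ∀ j, A j} {lamc muc : ℝ}
    (hsmooth : ∀ a : (∀ j, A j),
      ∑ i, (W a - W (Function.update a i (astar i))) ≤ muc * W a - lamc * W astar)
    (hbr : ∀ i a x, U i (Function.update a i x) ≤ U i (Function.update a i (br i a)))
    (hmis : ∀ i a, |U i a - W a| ≤ ε) (a : ∀ j, A j) :
    ∑ i, (W a - W (Function.update a i (br i a))) ≤ muc * W a - lamc * W astar + n * (2 * ε) :=
  calc ∑ i, (W a - W (Function.update a i (br i a)))
      = ∑ i, (W a - W (Function.update a i (astar i)))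
        + ∑ i, (W (Function.update a i (astar i)) - W (Function.update a i (br i a))) := by
        rw [← sum_add_distrib]; exact sum_congr rfl fun _ _ => by ring
    _ ≤ muc * W a - lamc * W astar + ∑ _i : Fin n, 2 * ε :=
        add_le_add (hsmooth a) (sum_le_sum fun i _ => sub_welfare_bestResponse_le hbr hmis i a _)
    _ = muc * W a - lamc * W astar + n * (2 * ε) := by simp

end Misalignment

lemma max_div_mul_le {x muc w S : ℝ} (hS : 0 ≤ S) (hmuc : 0 ≤ muc) (h : x * w ≤ muc * S) :
    max (x / muc) 0 * w ≤ S := by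
  rcases le_or_gt (x / muc) 0 with hle | hpos
  · rwa [max_eq_right hle, zero_mul]
  · have hmuc' : 0 < muc := hmuc.lt_of_ne fun h0 => by simp [← h0] at hpos
    rwa [max_eq_left hpos.le, div_mul_eq_mul_div, div_le_iff₀ hmuc', mul_comm S]

theorem pose_arithmetic_misalignment_general
    {n : ℕ} {A : Fin n → Type*}
    [∀ i, Fintype (A i)] [∀ i, DecidableEq (A i)]
    (U : Fin n → (∀ j, A j) → ℝ) (W : (∀ j, A j) → ℝ)
    (hW : ∀ a, 0 ≤ W a)
    (astar : ∀ j, A j)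
    (lamc muc : ℝ) (hlam : 0 ≤ lamc) (hlm : lamc ≤ muc)
    -- common-interest smoothness constants
    (hsmooth : ∀ a : (∀ j, A j),
      ∑ i, (W a - W (Function.update a i (astar i))) ≤ muc * W a - lamc * W astar)
    (br : ∀ i : Fin n, (∀ j, A j) → A i)
    -- unique best responses
    (hbr : ∀ (i : Fin n) (a : (∀ j, A j)) (x : A i),
      U i (Function.update a i x) ≤ U i (Function.update a i (br i a)))
    -- β-arithmetic misalignment
    (beta : ℝ) (hbeta : 0 ≤ beta)
    (hmis : ∀ (i : Fin n) (a : (∀ j, A j)), |U i a - W a| ≤ beta * W astar)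
    -- σ is a sink equilibrium of the best-response Markov chain
    (σ : (∀ j, A j) → ℝ)
    (hσ_nonneg : ∀ a, 0 ≤ σ a) (hσ_sum : ∑ a, σ a = 1)
    (hstat : ∀ a : (∀ j, A j), σ a = (1 / (n : ℝ)) *
      ∑ b : (∀ j, A j),
        ((Finset.univ.filter
          (fun i : Fin n => Function.update b i (br i b) = a)).card : ℝ) * σ b) :
    ∑ a : (∀ j, A j), σ a * W a ≥ max ((lamc - 4 * beta * n) / muc) 0 * W astar := by
  have hdrift := IsUniformStepStationary.sum_mul_sum_sub_step
    (step := fun i a => Function.update a i (br i a)) hstat W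
  have hbound := sum_sub_welfare_bestResponse_le hsmooth hbr hmis
  have hmain : (lamc - 2 * beta * n) * W astar ≤ muc * ∑ a, σ a * W a := by
    have hexpect : ∑ a, σ a * (muc * W a - lamc * W astar + n * (2 * (beta * W astar)))
        = muc * ∑ a, σ a * W a - (lamc - 2 * beta * n) * W astar := by
      simp only [mul_add, mul_sub, sum_add_distrib, sum_sub_distrib, ← sum_mul, hσ_sum, mul_sum]
      rw [sum_congr rfl fun a _ => mul_left_comm (σ a) muc (W a)]
      ring
    have hdrift_le := hdrift.symm.le.trans (sum_le_sum fun a (_ : a ∈ univ) =>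
      mul_le_mul_of_nonneg_left (hbound a) (hσ_nonneg a))
    linarith
  have hslack : 0 ≤ beta * n * W astar := by have := hW astar; positivity
  refine max_div_mul_le (sum_nonneg fun a _ => mul_nonneg (hσ_nonneg a) (hW a))
    (hlam.trans hlm) ?_
  linarith

/-- price-of-sinking bound under `β`-arithmetic misalignment. -/
theorem pose_arithmetic_misalignment
    {n : ℕ} (hn : 0 < n) {A : Fin n → Type*}
    [∀ i, Fintype (A i)] [∀ i, DecidableEq (A i)]
    (U : Fin n → (∀ j, A j) → ℝ) (W : (∀ j, A j) → ℝ)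
    (hW : ∀ a, 0 ≤ W a)
    (astar : ∀ j, A j) (hopt : ∀ a, W a ≤ W astar) (hWpos : 0 < W astar)
    (lamc muc : ℝ) (hlam : 0 ≤ lamc) (hlm : lamc ≤ muc)
    -- common-interest smoothness constants
    (hsmooth : ∀ a : (∀ j, A j),
      ∑ i, (W a - W (Function.update a i (astar i))) ≤ muc * W a - lamc * W astar)
    (br : ∀ i : Fin n, (∀ j, A j) → A i)
    -- unique best responses
    (hbr : ∀ (i : Fin n) (a : (∀ j, A j)) (x : A i),
      U i (Function.update a i x) ≤ U i (Function.update a i (br i a)))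
    (hbr_unique : ∀ (i : Fin n) (a : (∀ j, A j)) (x : A i),
      U i (Function.update a i x) = U i (Function.update a i (br i a)) → x = br i a)
    -- β-arithmetic misalignment
    (beta : ℝ) (hbeta : 0 ≤ beta)
    (hmis : ∀ (i : Fin n) (a : (∀ j, A j)), |U i a - W a| ≤ beta * W astar)
    -- σ is a sink equilibrium of the best-response Markov chain
    (σ : (∀ j, A j) → ℝ)
    (hσ_nonneg : ∀ a, 0 ≤ σ a) (hσ_sum : ∑ a, σ a = 1)
    (hstat : ∀ a : (∀ j, A j), σ a = (1 / (n : ℝ)) *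
      ∑ b : (∀ j, A j),
        ((Finset.univ.filter
          (fun i : Fin n => Function.update b i (br i b) = a)).card : ℝ) * σ b)
    (hsink : ∀ a : (∀ j, A j), 0 < σ a → ∀ i : Fin n,
      0 < σ (Function.update a i (br i a))) :
    ∑ a : (∀ j, A j), σ a * W a ≥ max ((lamc - 4 * beta * n) / muc) 0 * W astar :=
  pose_arithmetic_misalignment_general U W hW astar lamc muc hlam hlm hsmooth br hbr beta hbeta hmis
    σ hσ_nonneg hσ_sum hstat
end

section
/- In a game with unique best responses, for any sink equilibrium σ of the best-response Markov chain and any i, if a ∈ supp(σ) then (br_i(a), a_{−i}) ∈ supp(σ); moreover W(br_i(a), a_{−i}) ≥ (1−β)² W(a*_i, a_{−i}) whenever (1−β) W(a) ≤ U_i(a) ≤ W(a)/(1−β) holds for all actions. -/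
/-- for a sink equilibrium of the best-response chain, the support is
closed under best responses, and under `β`-geometric misalignment each best response
satisfies `W(br_i(a), a_{−i}) ≥ (1−β)² W(a*_i, a_{−i})`. -/
theorem sink_support_closed_and_br_welfare_bound
    {n : ℕ} (hn : 0 < n) {A : Fin n → Type*}
    [∀ i, Fintype (A i)] [∀ i, DecidableEq (A i)]
    (U : Fin n → (∀ j, A j) → ℝ) (W : (∀ j, A j) → ℝ)
    (hW : ∀ a, 0 ≤ W a) (hU_nonneg : ∀ i a, 0 ≤ U i a)
    (astar : ∀ j, A j)
    (br : ∀ i : Fin n, (∀ j, A j) → A i)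
    (hbr : ∀ (i : Fin n) (a : (∀ j, A j)) (x : A i),
      U i (Function.update a i x) ≤ U i (Function.update a i (br i a)))
    (hbr_unique : ∀ (i : Fin n) (a : (∀ j, A j)) (x : A i),
      U i (Function.update a i x) = U i (Function.update a i (br i a)) → x = br i a)
    (beta : ℝ) (hbeta : 0 ≤ beta) (hbeta1 : beta < 1)
    (hmis_lo : ∀ (i : Fin n) (a : (∀ j, A j)), (1 - beta) * W a ≤ U i a)
    (hmis_hi : ∀ (i : Fin n) (a : (∀ j, A j)), U i a ≤ W a / (1 - beta))
    -- σ is a sink equilibrium of the best-response Markov chain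
    (σ : (∀ j, A j) → ℝ)
    (hσ_nonneg : ∀ a, 0 ≤ σ a) (hσ_sum : ∑ a, σ a = 1)
    (hstat : ∀ a : (∀ j, A j), σ a = (1 / (n : ℝ)) *
      ∑ b : (∀ j, A j),
        ((Finset.univ.filter
          (fun i : Fin n => Function.update b i (br i b) = a)).card : ℝ) * σ b) :
    ∀ (a : (∀ j, A j)) (i : Fin n), 0 < σ a →
      0 < σ (Function.update a i (br i a)) ∧
      W (Function.update a i (br i a)) ≥
        (1 - beta) ^ 2 * W (Function.update a i (astar i)) := by
  intro a i ha
  have hb1 : (0:ℝ) < 1 - beta := by linarith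
  constructor
  · set a' := Function.update a i (br i a) with ha'
    rw [hstat a']
    have hmem : i ∈ Finset.univ.filter
        (fun j : Fin n => Function.update a j (br j a) = a') := by
      simp [ha']
    have hcard : (1:ℝ) ≤ ((Finset.univ.filter
        (fun j : Fin n => Function.update a j (br j a) = a')).card : ℝ) := by
      exact_mod_cast Finset.one_le_card.mpr ⟨i, hmem⟩
    have hterm : σ a ≤ ((Finset.univ.filter
        (fun j : Fin n => Function.update a j (br j a) = a')).card : ℝ) * σ a := by
      nlinarith [hσ_nonneg a]
    have hsum : σ a ≤ ∑ b : (∀ j, A j),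
        ((Finset.univ.filter
          (fun j : Fin n => Function.update b j (br j b) = a')).card : ℝ) * σ b := by
      calc σ a ≤ _ := hterm
        _ ≤ _ := Finset.single_le_sum (f := fun b => ((Finset.univ.filter
            (fun j : Fin n => Function.update b j (br j b) = a')).card : ℝ) * σ b)
            (fun b _ => mul_nonneg (Nat.cast_nonneg _) (hσ_nonneg b))
            (Finset.mem_univ a)
    have hnpos : (0:ℝ) < 1 / (n : ℝ) := by
      have : (0:ℝ) < (n:ℝ) := by exact_mod_cast hn
      positivity
    nlinarith
  · have h1 : (1 - beta) * U i (Function.update a i (br i a)) ≤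
        W (Function.update a i (br i a)) := by
      have := hmis_hi i (Function.update a i (br i a))
      rw [le_div_iff₀ hb1] at this
      linarith [this]
    have h2 : U i (Function.update a i (astar i)) ≤
        U i (Function.update a i (br i a)) := hbr i a (astar i)
    have h3 : (1 - beta) * W (Function.update a i (astar i)) ≤
        U i (Function.update a i (astar i)) := hmis_lo i _
    nlinarith
end

section
/- Let G be a (λ, μ)-smooth game. Then every sink equilibrium σ induced by better-response dynamics contains in its support a joint action ã with W(ã) ≥ (λ/μ)·W(a*). -/
/-- in a `(λ,μ)`-smooth game, every sink equilibrium of the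
better-response dynamics contains in its support a joint action `ã` with
`W(ã) ≥ (λ/μ)·W(a*)`. -/
theorem better_response_sink_contains_good_action
    {n : ℕ} {A : Fin n → Type*} [∀ i, Fintype (A i)] [∀ i, DecidableEq (A i)]
    (U : Fin n → (∀ j, A j) → ℝ) (W : (∀ j, A j) → ℝ)
    (hW : ∀ a, 0 ≤ W a)
    (astar : ∀ j, A j) (hopt : ∀ a, W a ≤ W astar)
    (lam mu : ℝ) (hlam : 0 ≤ lam) (hlm : lam ≤ mu)
    (hsmooth : ∀ a : (∀ j, A j),
      ∑ i, (U i a - U i (Function.update a i (astar i))) ≤ mu * W a - lam * W astar)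
    -- S is the support of a sink equilibrium of the better-response chain:
    -- it is nonempty and closed under better responses of every player
    (S : Set (∀ j, A j)) (hS_ne : S.Nonempty)
    (hS_closed : ∀ a ∈ S, ∀ (i : Fin n) (x : A i),
      U i a ≤ U i (Function.update a i x) → Function.update a i x ∈ S) :
    ∃ atil ∈ S, W atil ≥ (lam / mu) * W astar := by
  rcases hS_ne with ⟨a0, ha0⟩
  rcases le_or_gt mu 0 with hmu | hmu
  · have hl0 : lam = 0 := le_antisymm (hlm.trans hmu) hlam
    exact ⟨a0, ha0, by simp [hl0, hW a0]⟩
  · by_contra hcon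
    push_neg at hcon
    have key : ∀ a ∈ S, ∃ i, U i a < U i (Function.update a i (astar i)) := by
      intro a ha
      by_contra h
      push_neg at h
      have hsum : (0:ℝ) ≤ ∑ i, (U i a - U i (Function.update a i (astar i))) :=
        Finset.sum_nonneg (fun i _ => sub_nonneg.mpr (h i))
      have hc := hcon a ha
      rw [div_mul_eq_mul_div, lt_div_iff₀ hmu] at hc
      have := hsmooth a
      nlinarith
    have main : ∀ k : ℕ, ∀ a ∈ S,
        (Finset.univ.filter (fun j => a j ≠ astar j)).card ≤ k → False := by
      intro k
      induction k with
      | zero =>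
        intro a ha hcard
        obtain ⟨i, hi⟩ := key a ha
        have hne : a i ≠ astar i := by
          intro h
          rw [← h, Function.update_eq_self] at hi
          exact lt_irrefl _ hi
        have hmem : i ∈ Finset.univ.filter (fun j => a j ≠ astar j) := by
          simp [hne]
        have := Finset.card_pos.mpr ⟨i, hmem⟩
        omega
      | succ k ih =>
        intro a ha hcard
        obtain ⟨i, hi⟩ := key a ha
        have hne : a i ≠ astar i := by
          intro h
          rw [← h, Function.update_eq_self] at hi
          exact lt_irrefl _ hi
        have ha' : Function.update a i (astar i) ∈ S := hS_closed a ha i (astar i) hi.le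
        apply ih (Function.update a i (astar i)) ha'
        have hmem : i ∈ Finset.univ.filter (fun j => a j ≠ astar j) := by
          simp [hne]
        have hsub : Finset.univ.filter (fun j => Function.update a i (astar i) j ≠ astar j)
            ⊆ (Finset.univ.filter (fun j => a j ≠ astar j)).erase i := by
          intro j hj
          simp only [Finset.mem_filter, Finset.mem_erase, Finset.mem_univ, true_and] at *
          rcases eq_or_ne j i with rfl | hji
          · simp at hj
          · rw [Function.update_of_ne hji] at hj
            exact ⟨hji, hj⟩
        have := Finset.card_le_card hsub
        rw [Finset.card_erase_of_mem hmem] at this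
        omega
    exact main _ a0 ha0 le_rfl
end

section
/- In any finite game, for every sink equilibrium σ of the better-response dynamics there exists a joint action a* ∈ supp(σ) such that U_i(a*) ≥ U_i(x_i, a*_{−i}) for every player i, where (x_1,…,x_n) is any fixed joint action. (That is, the support of a better-response sink contains an action that weakly prefers itself to unilateral deviations to the fixed profile x.) -/
/-- the support of any better-response sink equilibrium contains an
action that weakly prefers itself to every unilateral deviation to a fixed profile `x`. -/
theorem better_response_sink_contains_stable_action
    {n : ℕ} {A : Fin n → Type*} [∀ i, Fintype (A i)] [∀ i, DecidableEq (A i)]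
    (U : Fin n → (∀ j, A j) → ℝ)
    (x : ∀ j, A j)
    -- S is the support of a sink equilibrium of the better-response chain:
    -- it is nonempty and closed under better responses of every player
    (S : Set (∀ j, A j)) (hS_ne : S.Nonempty)
    (hS_closed : ∀ a ∈ S, ∀ (i : Fin n) (y : A i),
      U i a ≤ U i (Function.update a i y) → Function.update a i y ∈ S) :
    ∃ a ∈ S, ∀ i : Fin n, U i (Function.update a i (x i)) ≤ U i a := by
  classical
  obtain ⟨a0, ha0⟩ := hS_ne
  -- measure: number of coordinates differing from x
  suffices h : ∀ (k : ℕ) (a : ∀ j, A j), a ∈ S →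
      (Finset.univ.filter fun j => a j ≠ x j).card ≤ k →
      ∃ b ∈ S, ∀ i : Fin n, U i (Function.update b i (x i)) ≤ U i b by
    exact h _ a0 ha0 le_rfl
  intro k
  induction k with
  | zero =>
    intro a ha hcard
    refine ⟨a, ha, fun i => ?_⟩
    have : a i = x i := by
      by_contra hne
      have : i ∈ Finset.univ.filter fun j => a j ≠ x j := by
        simp [hne]
      have := Finset.card_pos.mpr ⟨i, this⟩
      omega
    rw [← this, Function.update_eq_self]
  | succ k ih =>
    intro a ha hcard
    by_cases hall : ∀ i : Fin n, U i (Function.update a i (x i)) ≤ U i a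
    · exact ⟨a, ha, hall⟩
    · push_neg at hall
      obtain ⟨i, hi⟩ := hall
      have hne : a i ≠ x i := by
        intro heq
        rw [← heq, Function.update_eq_self] at hi
        exact lt_irrefl _ hi
      set b := Function.update a i (x i) with hb
      have hbS : b ∈ S := hS_closed a ha i (x i) hi.le
      refine ih b hbS ?_
      have hsub : (Finset.univ.filter fun j => b j ≠ x j) ⊆
          (Finset.univ.filter fun j => a j ≠ x j).erase i := by
        intro j hj
        simp only [Finset.mem_filter, Finset.mem_univ, true_and] at hj
        have hji : j ≠ i := by
          intro h
          apply hj
          rw [h, hb, Function.update_self]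
        rw [Finset.mem_erase]
        refine ⟨hji, ?_⟩
        simp only [Finset.mem_filter, Finset.mem_univ, true_and]
        rwa [hb, Function.update_of_ne hji] at hj
      have hiMem : i ∈ Finset.univ.filter fun j => a j ≠ x j := by simp [hne]
      have := Finset.card_le_card hsub
      have := Finset.card_erase_of_mem hiMem
      omega
end

section
/- Consider the k=2 channel interference game: each of n players chooses a channel a_i ∈ {1,2}, and W(a) = ∑_i ∑_{j : a_j ≠ a_i} w_{ij} with w_{ij} ≥ 0. Then the common-interest smoothness inequality ∑_{i} (W(a) − W(a*_i, a_{−i})) ≤ 3 W(a) − W(a*) holds for all joint actions a, where a* maximizes W; i.e., (λ_c, μ_c) = (1, 3) are valid smoothness constants. -/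
/-- Welfare of the two-channel interference game: total weight between players
on different channels. -/
def interfW {n : ℕ} (w : Fin n → Fin n → ℝ) (a : Fin n → Fin 2) : ℝ :=
  ∑ i, ∑ j ∈ Finset.univ.filter (fun j => a j ≠ a i), w i j

noncomputable def ccInd (x y : Fin 2) : ℝ := if y ≠ x then 1 else 0

lemma ccInd_self (x : Fin 2) : ccInd x x = 0 := by simp [ccInd]

lemma interfW_eq {n : ℕ} (w : Fin n → Fin n → ℝ) (a : Fin n → Fin 2) :
    interfW w a = ∑ i, ∑ j, ccInd (a i) (a j) * w i j := by
  unfold interfW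
  refine Finset.sum_congr rfl fun i _ => ?_
  rw [Finset.sum_filter]
  refine Finset.sum_congr rfl fun j _ => ?_
  by_cases h : a j ≠ a i <;> simp [h, ccInd]

lemma key (x y x' y' : Fin 2) :
    2 * ccInd x y - ccInd x' y - ccInd x y' ≤ 3 * ccInd x y - ccInd x' y' := by
  fin_cases x <;> fin_cases y <;> fin_cases x' <;> fin_cases y' <;>
    simp [ccInd] <;> norm_num

/-- the common-interest smoothness inequality with constants
`(λ_c, μ_c) = (1, 3)` holds for the two-channel interference game. -/
theorem interference_smoothness_one_three
    {n : ℕ} (w : Fin n → Fin n → ℝ) (hw : ∀ i j, 0 ≤ w i j)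
    (a astar : Fin n → Fin 2) :
    ∑ i, (interfW w a - interfW w (Function.update a i (astar i)))
      ≤ 3 * interfW w a - interfW w astar := by
  set g : Fin n → Fin n → Fin n → ℝ := fun i k j =>
    (ccInd (a k) (a j) -
      ccInd (Function.update a i (astar i) k) (Function.update a i (astar i) j)) * w k j
    with hg
  have h1 : ∀ i, interfW w a - interfW w (Function.update a i (astar i))
      = ∑ k, ∑ j, g i k j := by
    intro i
    rw [interfW_eq, interfW_eq, ← Finset.sum_sub_distrib]
    refine Finset.sum_congr rfl fun k _ => ?_
    rw [← Finset.sum_sub_distrib]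
    refine Finset.sum_congr rfl fun j _ => ?_
    rw [hg]; ring
  have h2 : ∀ k j : Fin n, ∑ i, g i k j =
      (if k = j then 0 else
        2 * ccInd (a k) (a j) - ccInd (astar k) (a j) - ccInd (a k) (astar j)) * w k j := by
    intro k j
    by_cases hkj : k = j
    · subst hkj
      simp only [hg, ccInd_self]
      simp
    · rw [if_neg hkj]
      have hsub : (∑ i, g i k j) = ∑ i ∈ ({k, j} : Finset (Fin n)), g i k j := by
        refine (Finset.sum_subset (Finset.subset_univ _) fun i _ hi => ?_).symm
        simp only [Finset.mem_insert, Finset.mem_singleton, not_or] at hi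
        simp only [hg]
        rw [Function.update_of_ne (Ne.symm hi.1), Function.update_of_ne (Ne.symm hi.2)]
        ring
      rw [hsub, Finset.sum_pair hkj, hg]
      simp only [Function.update_self,
        Function.update_of_ne hkj, Function.update_of_ne (Ne.symm hkj)]
      ring
  calc ∑ i, (interfW w a - interfW w (Function.update a i (astar i)))
      = ∑ i, ∑ k, ∑ j, g i k j := Finset.sum_congr rfl fun i _ => h1 i
    _ = ∑ k, ∑ j, ∑ i, g i k j := by
        rw [Finset.sum_comm]
        exact Finset.sum_congr rfl fun k _ => Finset.sum_comm
    _ ≤ ∑ k, ∑ j, (3 * ccInd (a k) (a j) - ccInd (astar k) (astar j)) * w k j := by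
        refine Finset.sum_le_sum fun k _ => Finset.sum_le_sum fun j _ => ?_
        rw [h2 k j]
        refine mul_le_mul_of_nonneg_right ?_ (hw k j)
        by_cases hkj : k = j
        · subst hkj; rw [if_pos rfl, ccInd_self, ccInd_self]; norm_num
        · rw [if_neg hkj]; exact key _ _ _ _
    _ = 3 * interfW w a - interfW w astar := by
        rw [interfW_eq w a, interfW_eq w astar, Finset.mul_sum, ← Finset.sum_sub_distrib]
        refine Finset.sum_congr rfl fun k _ => ?_
        rw [Finset.mul_sum, ← Finset.sum_sub_distrib]
        refine Finset.sum_congr rfl fun j _ => ?_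
        ring
end
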